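/- Semigroup property of the extended semigroup on the homogeneous sum space: for all z ∈ X + D(Ȧ) and all s, t ≥ 0, e^{−(s+t)A} z = e^{−sA}(e^{−tA} z), where for τ > 0 the operator e^{−τA} on X + D(Ȧ) is given by e^{−τA}(x + y) := e^{−τA}x + y − ∫₀^τ e^{−σA}Ȧy dσ (x ∈ X, y ∈ D(Ȧ)) and e^{0A} is the identity. -/
import Mathlib


open MeasureTheory Filter Topology Set
open scoped ENNReal NNReal

attribute [local instance] Classical.propDecidable

noncomputable section

/-- The measure `dt/t` on `(0,∞)`, used for the `L_{q,*}` spaces. -/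
def haarScale : MeasureTheory.Measure ℝ :=
  (MeasureTheory.volume.restrict (Set.Ioi (0:ℝ))).withDensity fun t => ENNReal.ofReal t⁻¹

/-- The `L_q` norm of an `ℝ≥0∞`-valued quantity with respect to a measure on `ℝ`. -/
def lqNorm (q : ℝ≥0∞) (μ : MeasureTheory.Measure ℝ) (F : ℝ → ℝ≥0∞) : ℝ≥0∞ :=
  if q = ⊤ then essSup F μ else (∫⁻ t, F t ^ q.toReal ∂μ) ^ (1 / q.toReal)

/-- The time interval `(0, T)` for `T ∈ (0,∞]`. -/
def timeInterval (T : ℝ≥0∞) : Set ℝ := {t : ℝ | 0 < t ∧ ENNReal.ofReal t < T}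

/-- The abstract setting of the homogeneous Da Prato–Grisvard theory: `X` is a complex
Banach space, `A : D(A) ⊆ X → X` is a closed, densely defined, injective linear operator
such that `−A` generates a bounded strongly continuous analytic semigroup `(e^{−tA})_{t≥0}`
(encoded by the field `S` together with the bounds `S_bdd` and `S_analytic` and the
generator identities `gen_eq` and `gen_eq_dom`); `Y` is a normed space, compatible with `X`
inside an ambient Hausdorff topological vector space `Z`, with `D(A) ⊆ Y` and
`C₁‖Ax‖ ≤ ‖x‖_Y ≤ C₂‖Ax‖` on `D(A)`; moreover `D(Ȧ) ∩ X = D(A)` (field `inter_sub`). -/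
structure DPG (X Y Z : Type*) [NormedAddCommGroup X] [NormedSpace ℂ X] [CompleteSpace X]
    [NormedAddCommGroup Y] [NormedSpace ℂ Y]
    [AddCommGroup Z] [Module ℂ Z] [TopologicalSpace Z] [T2Space Z] : Type _ where
  ιX : X →ₗ[ℂ] Z
  ιY : Y →ₗ[ℂ] Z
  ιX_inj : Function.Injective ιX
  ιY_inj : Function.Injective ιY
  dom : Submodule ℂ X
  dom_dense : Dense (dom : Set X)
  Aop : dom →ₗ[ℂ] X
  A_closed : IsClosed {p : X × X | ∃ x : dom, (x : X) = p.1 ∧ Aop x = p.2}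
  A_inj : ∀ x : dom, Aop x = 0 → (x : X) = 0
  jY : dom →ₗ[ℂ] Y
  j_compat : ∀ x : dom, ιX (x : X) = ιY (jY x)
  C₁ : ℝ
  C₂ : ℝ
  C₁_pos : 0 < C₁
  C₂_pos : 0 < C₂
  normY_lower : ∀ x : dom, C₁ * ‖Aop x‖ ≤ ‖jY x‖
  normY_upper : ∀ x : dom, ‖jY x‖ ≤ C₂ * ‖Aop x‖
  S : ℝ → X →L[ℂ] X
  S_zero : S 0 = 1
  S_add : ∀ s t : ℝ, 0 ≤ s → 0 ≤ t → S (s + t) = (S s).comp (S t)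
  S_strong_cont : ∀ x : X, ContinuousOn (fun t => S t x) (Set.Ici (0:ℝ))
  M₀ : ℝ
  S_bdd : ∀ t : ℝ, 0 ≤ t → ‖S t‖ ≤ M₀
  S_smoothing : ∀ (t : ℝ), 0 < t → ∀ x : X, S t x ∈ dom
  M : ℝ
  S_analytic : ∀ (t : ℝ) (ht : 0 < t) (x : X),
    t * ‖Aop ⟨S t x, S_smoothing t ht x⟩‖ ≤ M * ‖x‖
  int_mem : ∀ (x : X) (t : ℝ), (∫ s in Set.Ioc (0:ℝ) t, S s x) ∈ dom
  gen_eq : ∀ (x : X) (t : ℝ), 0 ≤ t →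
    Aop ⟨∫ s in Set.Ioc (0:ℝ) t, S s x, int_mem x t⟩ = x - S t x
  gen_eq_dom : ∀ (x : dom) (t : ℝ), 0 ≤ t →
    S t (x : X) - (x : X) = - ∫ s in Set.Ioc (0:ℝ) t, S s (Aop x)
  inter_sub : ∀ (x : X) (y : Y),
    (∃ u : ℕ → dom, Filter.Tendsto (fun n => jY (u n)) Filter.atTop (nhds y)) →
    ιX x = ιY y → x ∈ dom

namespace DPG

variable {X Y Z : Type*} [NormedAddCommGroup X] [NormedSpace ℂ X] [CompleteSpace X]
  [NormedAddCommGroup Y] [NormedSpace ℂ Y]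
  [AddCommGroup Z] [Module ℂ Z] [TopologicalSpace Z] [T2Space Z]
  (E : DPG X Y Z)

/-- `A` as an everywhere-defined function on `X` (junk value `0` off the domain). -/
def Afun (x : X) : X := if h : x ∈ E.dom then E.Aop ⟨x, h⟩ else 0

/-- The domain `D(Ȧ) ⊆ Y` of the homogeneous operator: limits in `Y` of sequences in `D(A)`. -/
def DdotA : Set Y :=
  {y : Y | ∃ u : ℕ → E.dom, Filter.Tendsto (fun n => E.jY (u n)) Filter.atTop (nhds y)}

/-- The homogeneous operator `Ȧ : D(Ȧ) → X`, `Ȧ y = lim_k A x_k` for `x_k → y` in `Y`. -/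
def Adot (y : Y) : X :=
  @Classical.epsilon X ⟨0⟩ fun L =>
    ∃ u : ℕ → E.dom, Filter.Tendsto (fun n => E.jY (u n)) Filter.atTop (nhds y) ∧
      Filter.Tendsto (fun n => E.Aop (u n)) Filter.atTop (nhds L)

/-- The sum space `X + D(Ȧ)`, realized inside the ambient space `Z`. -/
def sumSpace : Set Z :=
  {z : Z | ∃ (x : X) (y : Y), y ∈ E.DdotA ∧ z = E.ιX x + E.ιY y}

/-- A choice of the `X`-component of an element of `X + D(Ȧ)`. -/
def decompX (z : Z) : X :=
  if h : ∃ (x : X) (y : Y), y ∈ E.DdotA ∧ z = E.ιX x + E.ιY y then h.choose else 0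

/-- A choice of the `D(Ȧ)`-component of an element of `X + D(Ȧ)`. -/
def decompY (z : Z) : Y :=
  if h : ∃ (x : X) (y : Y), y ∈ E.DdotA ∧ z = E.ιX x + E.ιY y then h.choose_spec.choose else 0

/-- `Ȧ` acting on elements of `Z` lying in (the image of) `D(Ȧ)`. -/
def AdotZ (z : Z) : X :=
  if h : ∃ y : Y, y ∈ E.DdotA ∧ E.ιY y = z then E.Adot h.choose else 0

/-- The extension of the semigroup to the sum space:
`e^{−tA}(x+y) = e^{−tA}x + y − ∫₀ᵗ e^{−sA}Ȧy ds`. -/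
def SGext (t : ℝ) (z : Z) : Z :=
  E.ιX (E.S t (E.decompX z) - ∫ s in Set.Ioc (0:ℝ) t, E.S s (E.Adot (E.decompY z)))
    + E.ιY (E.decompY z)

/-- `Ȧ e^{−tA} z` for `z ∈ X + D(Ȧ)`. -/
def AdotSG (z : Z) (t : ℝ) : X := E.AdotZ (E.SGext t z)

/-- The homogeneous Da Prato–Grisvard norm `‖z‖_{Ḋ_A(θ,q)}` on the sum space. -/
def homNorm (θ : ℝ) (q : ℝ≥0∞) (z : Z) : ℝ≥0∞ :=
  MeasureTheory.eLpNorm (fun t : ℝ => t ^ (1 - θ) • E.AdotSG z t) q haarScale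

/-- The homogeneous Da Prato–Grisvard norm of an element of `X`
(for which `Ȧe^{−tA}x = Ae^{−tA}x`). -/
def homNormX (θ : ℝ) (q : ℝ≥0∞) (x : X) : ℝ≥0∞ :=
  MeasureTheory.eLpNorm (fun t : ℝ => t ^ (1 - θ) • E.Afun (E.S t x)) q haarScale

/-- The (inhomogeneous) norm of `D_A(θ,q)`. -/
def inhomNorm (θ : ℝ) (q : ℝ≥0∞) (x : X) : ℝ≥0∞ :=
  ENNReal.ofReal ‖x‖ + E.homNormX θ q x

/-- Membership in `D_A(θ,q)`. -/
def memDA (θ : ℝ) (q : ℝ≥0∞) (x : X) : Prop :=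
  MeasureTheory.AEStronglyMeasurable (fun t : ℝ => t ^ (1 - θ) • E.Afun (E.S t x)) haarScale ∧
    E.homNormX θ q x < ⊤

/-- Membership in `Ḋ_A(θ,q)`. -/
def memDdot (θ : ℝ) (q : ℝ≥0∞) (z : Z) : Prop :=
  z ∈ E.sumSpace ∧
    MeasureTheory.AEStronglyMeasurable (fun t : ℝ => t ^ (1 - θ) • E.AdotSG z t) haarScale ∧
    E.homNorm θ q z < ⊤

/-- The `K`-functional of the interpolation couple `(X, D(Ȧ))`. -/
def Kfun (t : ℝ) (z : Z) : ℝ≥0∞ :=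
  ⨅ (x : X) (y : Y) (_ : y ∈ E.DdotA) (_ : E.ιX x + E.ιY y = z),
    ENNReal.ofReal (‖x‖ + t * ‖E.Adot y‖)

/-- The real interpolation norm of `(X, D(Ȧ))_{θ,q}`. -/
def interpNorm (θ : ℝ) (q : ℝ≥0∞) (z : Z) : ℝ≥0∞ :=
  lqNorm q haarScale fun t => ENNReal.ofReal (t ^ (-θ)) * E.Kfun t z

end DPG

namespace DPG

section Aux

variable {X Y Z : Type*} [NormedAddCommGroup X] [NormedSpace ℂ X] [CompleteSpace X]
  [NormedAddCommGroup Y] [NormedSpace ℂ Y]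
  [AddCommGroup Z] [Module ℂ Z] [TopologicalSpace Z] [T2Space Z]
  (E : DPG X Y Z)

lemma aop_norm_le (d : E.dom) : ‖E.Aop d‖ ≤ E.C₁⁻¹ * ‖E.jY d‖ := by
  have h := E.normY_lower d
  have h1 : (0:ℝ) < E.C₁ := E.C₁_pos
  rw [inv_mul_eq_div, le_div_iff₀ h1, mul_comm]
  exact h

lemma adot_ex {y : Y} (hy : y ∈ E.DdotA) :
    ∃ L : X, ∃ u : ℕ → E.dom, Tendsto (fun n => E.jY (u n)) atTop (𝓝 y) ∧
      Tendsto (fun n => E.Aop (u n)) atTop (𝓝 L) := by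
  obtain ⟨u, hu⟩ := hy
  have hc : CauchySeq (fun n => E.jY (u n)) := hu.cauchySeq
  have hc2 : CauchySeq (fun n => E.Aop (u n)) := by
    rw [Metric.cauchySeq_iff] at hc ⊢
    intro ε hε
    obtain ⟨N, hN⟩ := hc (E.C₁ * ε) (mul_pos E.C₁_pos hε)
    refine ⟨N, fun m hm n hn => ?_⟩
    have h1 := hN m hm n hn
    rw [dist_eq_norm] at h1 ⊢
    have h2 : ‖E.Aop (u m) - E.Aop (u n)‖ ≤ E.C₁⁻¹ * ‖E.jY (u m) - E.jY (u n)‖ := by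
      rw [← map_sub, ← map_sub]
      exact E.aop_norm_le _
    have h3 : E.C₁⁻¹ * ‖E.jY (u m) - E.jY (u n)‖ < E.C₁⁻¹ * (E.C₁ * ε) := by
      apply mul_lt_mul_of_pos_left h1 (inv_pos.2 E.C₁_pos)
    calc ‖E.Aop (u m) - E.Aop (u n)‖ ≤ E.C₁⁻¹ * ‖E.jY (u m) - E.jY (u n)‖ := h2
      _ < E.C₁⁻¹ * (E.C₁ * ε) := h3
      _ = ε := inv_mul_cancel_left₀ (ne_of_gt E.C₁_pos) ε
  obtain ⟨L, hL⟩ := cauchySeq_tendsto_of_complete hc2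
  exact ⟨L, u, hu, hL⟩

lemma adot_uniq {y : Y} {L L' : X} {u v : ℕ → E.dom}
    (hu : Tendsto (fun n => E.jY (u n)) atTop (𝓝 y))
    (hAu : Tendsto (fun n => E.Aop (u n)) atTop (𝓝 L))
    (hv : Tendsto (fun n => E.jY (v n)) atTop (𝓝 y))
    (hAv : Tendsto (fun n => E.Aop (v n)) atTop (𝓝 L')) : L = L' := by
  have hA0 : Tendsto (fun n => E.Aop (u n) - E.Aop (v n)) atTop (𝓝 0) := by
    rw [tendsto_zero_iff_norm_tendsto_zero]
    have hj0 : Tendsto (fun n => ‖E.jY (u n) - E.jY (v n)‖) atTop (𝓝 0) := by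
      rw [← tendsto_zero_iff_norm_tendsto_zero]
      simpa using hu.sub hv
    refine squeeze_zero (g := fun n => E.C₁⁻¹ * ‖E.jY (u n) - E.jY (v n)‖)
      (fun n => norm_nonneg _)
      (fun n => by simpa only [map_sub] using E.aop_norm_le (u n - v n))
      (by simpa using hj0.const_mul E.C₁⁻¹)
  have h2 : Tendsto (fun n => E.Aop (u n) - E.Aop (v n)) atTop (𝓝 (L - L')) :=
    hAu.sub hAv
  have := tendsto_nhds_unique h2 hA0
  exact sub_eq_zero.1 this

lemma adot_spec {y : Y} (hy : y ∈ E.DdotA) :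
    ∃ u : ℕ → E.dom, Tendsto (fun n => E.jY (u n)) atTop (𝓝 y) ∧
      Tendsto (fun n => E.Aop (u n)) atTop (𝓝 (E.Adot y)) :=
  Classical.epsilon_spec_aux (⟨0⟩ : Nonempty X) _ (E.adot_ex hy)

lemma jY_mem_DdotA (d : E.dom) : E.jY d ∈ E.DdotA :=
  ⟨fun _ => d, tendsto_const_nhds⟩

lemma adot_add_jY {b : Y} (hb : b ∈ E.DdotA) (d : E.dom) :
    E.Adot (b + E.jY d) = E.Adot b + E.Aop d := by
  obtain ⟨u, hu, hAu⟩ := E.adot_spec hb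
  have hmem : b + E.jY d ∈ E.DdotA := by
    refine ⟨fun n => u n + d, ?_⟩
    simpa [map_add] using hu.add (tendsto_const_nhds (x := E.jY d))
  obtain ⟨v, hv, hAv⟩ := E.adot_spec hmem
  refine E.adot_uniq hv hAv (v := fun n => u n + d) ?_ ?_
  · simpa [map_add] using hu.add (tendsto_const_nhds (x := E.jY d))
  · simpa [map_add] using hAu.add (tendsto_const_nhds (x := E.Aop d))

lemma S_intervalIntegrable (w : X) {a b : ℝ} (ha : 0 ≤ a) (hab : a ≤ b) :
    IntervalIntegrable (fun σ => E.S σ w) MeasureTheory.volume a b := by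
  apply ContinuousOn.intervalIntegrable
  apply (E.S_strong_cont w).mono
  rw [Set.uIcc_of_le hab]
  exact fun σ hσ => le_trans ha hσ.1

lemma S_integrableOn (w : X) {t : ℝ} (ht : 0 ≤ t) :
    MeasureTheory.IntegrableOn (fun σ => E.S σ w) (Set.Ioc 0 t)
      MeasureTheory.volume := by
  rw [← intervalIntegrable_iff_integrableOn_Ioc_of_le ht]
  exact E.S_intervalIntegrable w le_rfl ht

lemma SG_welldef (s : ℝ) (hs : 0 ≤ s) (a a' : X) (b b' : Y)
    (hb : b ∈ E.DdotA) (hb' : b' ∈ E.DdotA)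
    (h : E.ιX a + E.ιY b = E.ιX a' + E.ιY b') :
    E.ιX (E.S s a - ∫ σ in Set.Ioc (0:ℝ) s, E.S σ (E.Adot b)) + E.ιY b
      = E.ιX (E.S s a' - ∫ σ in Set.Ioc (0:ℝ) s, E.S σ (E.Adot b')) + E.ιY b' := by
  have hmem : ∃ u : ℕ → E.dom, Tendsto (fun n => E.jY (u n)) atTop (𝓝 (b' - b)) := by
    obtain ⟨u, hu⟩ := hb; obtain ⟨u', hu'⟩ := hb'
    exact ⟨fun n => u' n - u n, by simpa [map_sub] using hu'.sub hu⟩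
  have hιeq : E.ιX (a - a') = E.ιY (b' - b) := by
    rw [map_sub, map_sub, sub_eq_sub_iff_add_eq_add, h, add_comm]
  have hd : a - a' ∈ E.dom := E.inter_sub _ _ hmem hιeq
  set d : E.dom := ⟨a - a', hd⟩ with hddef
  have hjd : E.jY d = b' - b := E.ιY_inj (by rw [← E.j_compat]; exact hιeq)
  have hb'eq : b' = b + E.jY d := by rw [hjd]; abel
  have hAd : E.Adot b' = E.Adot b + E.Aop d := by rw [hb'eq, E.adot_add_jY hb]
  have hib : MeasureTheory.IntegrableOn (fun σ => E.S σ (E.Adot b)) (Set.Ioc 0 s)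
      MeasureTheory.volume := E.S_integrableOn _ hs
  have hid : MeasureTheory.IntegrableOn (fun σ => E.S σ (E.Aop d)) (Set.Ioc 0 s)
      MeasureTheory.volume := E.S_integrableOn _ hs
  have hint : (∫ σ in Set.Ioc (0:ℝ) s, E.S σ (E.Adot b'))
      = (∫ σ in Set.Ioc (0:ℝ) s, E.S σ (E.Adot b))
        + ∫ σ in Set.Ioc (0:ℝ) s, E.S σ (E.Aop d) := by
    rw [← MeasureTheory.integral_add hib hid]
    congr 1
    funext σ
    rw [hAd, map_add]
  have hgen := E.gen_eq_dom d s hs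
  have hcoe : (d : X) = a - a' := rfl
  rw [hcoe] at hgen
  have key : E.S s a = E.S s a'
      + ((a - a') - ∫ σ in Set.Ioc (0:ℝ) s, E.S σ (E.Aop d)) := by
    have h1 : E.S s a - E.S s a' = E.S s (a - a') := (map_sub (E.S s) a a').symm
    have h2 : E.S s (a - a') = (a - a') - ∫ σ in Set.Ioc (0:ℝ) s, E.S σ (E.Aop d) := by
      have := hgen
      rw [sub_eq_iff_eq_add] at this
      rw [this]; abel
    rw [← h2, ← h1]; abel
  have hvec : E.S s a - ∫ σ in Set.Ioc (0:ℝ) s, E.S σ (E.Adot b)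
      = (E.S s a' - ∫ σ in Set.Ioc (0:ℝ) s, E.S σ (E.Adot b')) + (a - a') := by
    rw [hint, key]; abel
  rw [hvec, map_add, hιeq,
    show E.ιY (b' - b) = E.ιY b' - E.ιY b from map_sub _ _ _]
  abel

lemma decomp_spec {z : Z} (hz : z ∈ E.sumSpace) :
    E.decompY z ∈ E.DdotA ∧ z = E.ιX (E.decompX z) + E.ιY (E.decompY z) := by
  have h : ∃ (x : X) (y : Y), y ∈ E.DdotA ∧ z = E.ιX x + E.ιY y := hz
  rw [decompX, decompY, dif_pos h, dif_pos h]
  exact h.choose_spec.choose_spec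

end Aux

/-- the extended semigroup `(e^{−tA})_{t≥0}` on the sum space `X + D(Ȧ)`
satisfies the semigroup property `e^{−(s+t)A} z = e^{−sA}(e^{−tA} z)`. -/
theorem extended_semigroup_property
    {X Y Z : Type*} [NormedAddCommGroup X] [NormedSpace ℂ X] [CompleteSpace X]
    [NormedAddCommGroup Y] [NormedSpace ℂ Y]
    [AddCommGroup Z] [Module ℂ Z] [TopologicalSpace Z] [T2Space Z]
    (E : DPG X Y Z) :
    ∀ z ∈ E.sumSpace, ∀ s t : ℝ, 0 ≤ s → 0 ≤ t →
      E.SGext (s + t) z = E.SGext s (E.SGext t z) := by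
  intro z hz s t hs ht
  obtain ⟨hyz, hzeq⟩ := E.decomp_spec hz
  set x := E.decompX z with hxdef
  set y := E.decompY z with hydef
  set w := E.Adot y with hwdef
  have hz' : E.SGext t z ∈ E.sumSpace :=
    ⟨E.S t x - ∫ σ in Set.Ioc (0:ℝ) t, E.S σ w, y, hyz, rfl⟩
  obtain ⟨hy', heq'⟩ := E.decomp_spec hz'
  have step1 : E.SGext s (E.SGext t z)
      = E.ιX (E.S s (E.S t x - ∫ σ in Set.Ioc (0:ℝ) t, E.S σ w)
          - ∫ σ in Set.Ioc (0:ℝ) s, E.S σ w) + E.ιY y := by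
    have hdec : E.ιX (E.decompX (E.SGext t z)) + E.ιY (E.decompY (E.SGext t z))
        = E.ιX (E.S t x - ∫ σ in Set.Ioc (0:ℝ) t, E.S σ w) + E.ιY y := by
      rw [← heq']; rfl
    exact E.SG_welldef s hs _ _ _ _ hy' hyz hdec
  rw [step1]
  show E.ιX (E.S (s + t) x - ∫ σ in Set.Ioc (0:ℝ) (s + t), E.S σ w) + E.ιY y = _
  congr 2
  -- vector identity in X
  have hSst : E.S (s + t) x = E.S s (E.S t x) := by
    rw [E.S_add s t hs ht]; rfl
  have hIt : MeasureTheory.IntegrableOn (fun σ => E.S σ w) (Set.Ioc 0 t)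
      MeasureTheory.volume := E.S_integrableOn _ ht
  have hcomm : E.S s (∫ σ in Set.Ioc (0:ℝ) t, E.S σ w)
      = ∫ σ in Set.Ioc (0:ℝ) t, E.S s (E.S σ w) :=
    (ContinuousLinearMap.integral_comp_comm (E.S s) hIt).symm
  have hpt : (∫ σ in Set.Ioc (0:ℝ) t, E.S s (E.S σ w))
      = ∫ σ in Set.Ioc (0:ℝ) t, E.S (σ + s) w := by
    apply MeasureTheory.setIntegral_congr_fun measurableSet_Ioc
    intro σ hσ
    have hcomp : E.S (s + σ) = (E.S s).comp (E.S σ) := E.S_add s σ hs hσ.1.le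
    have h2 : E.S (s + σ) w = E.S s (E.S σ w) := by rw [hcomp]; rfl
    show E.S s (E.S σ w) = E.S (σ + s) w
    rw [add_comm σ s]
    exact h2.symm
  have hshift : (∫ σ in Set.Ioc (0:ℝ) t, E.S (σ + s) w)
      = ∫ σ in Set.Ioc s (s + t), E.S σ w := by
    rw [← intervalIntegral.integral_of_le ht,
      ← intervalIntegral.integral_of_le (by linarith : s ≤ s + t)]
    have := intervalIntegral.integral_comp_add_right (a := (0:ℝ)) (b := t)
      (fun σ => E.S σ w) s
    simpa [add_comm] using this
  have hsplit : (∫ σ in Set.Ioc (0:ℝ) (s + t), E.S σ w)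
      = (∫ σ in Set.Ioc (0:ℝ) s, E.S σ w) + ∫ σ in Set.Ioc s (s + t), E.S σ w := by
    rw [← intervalIntegral.integral_of_le (by linarith : (0:ℝ) ≤ s + t),
      ← intervalIntegral.integral_of_le hs,
      ← intervalIntegral.integral_of_le (by linarith : s ≤ s + t)]
    exact (intervalIntegral.integral_add_adjacent_intervals
      (E.S_intervalIntegrable w le_rfl hs)
      (E.S_intervalIntegrable w hs (by linarith))).symm
  rw [hSst, map_sub (E.S s), hcomm, hpt, hshift, hsplit]
  abel

end DPG
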